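/- arXiv:1911.01859 — 4 statements merged into one kernel-verified Lean document; each statement's English description precedes it below -/
import Mathlib

section
/- With the CAM setup, if in addition B = 0 and Λ is nonsingular, then γ* := Λ⁻¹Ω satisfies MSE(θ̂_{γ*}) − MSE(θ̂₀) = −ΩᵀΛ⁻¹Ω ≤ 0, and for every γ ∈ ℝ^k one has MSE(θ̂_{γ*}) ≤ MSE(θ̂_γ); that is, γ* achieves the maximum reduction in mean squared error. -/
open MeasureTheory ProbabilityTheory Matrix
open scoped NNReal ENNReal BigOperators

noncomputable def cov {Ωs : Type*} [MeasurableSpace Ωs] (μ : Measure Ωs) (f g : Ωs → ℝ) : ℝ :=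
  ∫ ω, (f ω - ∫ ω', f ω' ∂μ) * (g ω - ∫ ω', g ω' ∂μ) ∂μ

/-!
Write `Z := θ̂₀M − θ̂M`. Since `E Z = 0`, the matrix `Λ` is the second-moment matrix `E[Z Zᵀ]`,
and since `θ̂M` is independent of `θ̂₀`, also `Ω = E[(θ̂₀ − θ) Z]`. Expanding the square then
makes the MSE a quadratic in `γ`, namely `MSE(θ̂₀) − 2 γᵀΩ + γᵀΛγ`. Completing the square with
the symmetric invertible `Λ` rewrites it as `MSE(θ̂₀) + (γ − γ*)ᵀΛ(γ − γ*) − ΩᵀΛ⁻¹Ω`, and both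
`Λ` and `Λ⁻¹` are positive semidefinite.
-/

theorem Matrix.IsSymm.dotProduct_mulVec_sub_two_mul_dotProduct_eq {R n : Type*} [CommRing R]
    [Fintype n] [DecidableEq n] {Λ : Matrix n n R} (hΛ : Λ.IsSymm) (hdet : IsUnit Λ.det)
    (Ω γ : n → R) :
    γ ⬝ᵥ Λ *ᵥ γ - 2 * (γ ⬝ᵥ Ω)
      = (γ - Λ⁻¹ *ᵥ Ω) ⬝ᵥ Λ *ᵥ (γ - Λ⁻¹ *ᵥ Ω) - Ω ⬝ᵥ Λ⁻¹ *ᵥ Ω := by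
  have hΛΛinv : Λ *ᵥ (Λ⁻¹ *ᵥ Ω) = Ω := by
    rw [mulVec_mulVec, mul_nonsing_inv _ hdet, one_mulVec]
  have hsymm : Λ⁻¹ *ᵥ Ω ⬝ᵥ Λ *ᵥ γ = γ ⬝ᵥ Ω := by
    rw [dotProduct_mulVec, ← mulVec_transpose, hΛ.eq, hΛΛinv, dotProduct_comm]
  rw [mulVec_sub, sub_dotProduct, dotProduct_sub, dotProduct_sub, hΛΛinv, hsymm,
    dotProduct_comm (Λ⁻¹ *ᵥ Ω) Ω]
  ring

section SecondMoments

variable {Ω ι : Type*} [MeasurableSpace Ω] {μ : Measure Ω} [Fintype ι]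

noncomputable def secondMomentMatrix (Z : ι → Ω → ℝ) (μ : Measure Ω) : Matrix ι ι ℝ :=
  Matrix.of fun i j => ∫ ω, Z i ω * Z j ω ∂μ

theorem sub_sum_mul_sq_eq {R : Type*} [CommRing R] (x : R) (z γ : ι → R) :
    (x - ∑ j, γ j * z j) ^ 2
      = x ^ 2 - 2 * ∑ j, γ j * (x * z j) + ∑ i, γ i * ∑ j, z i * z j * γ j := by
  rw [sub_sq, sq (∑ j, _), Finset.sum_mul_sum, Finset.mul_sum]
  simp only [Finset.mul_sum]
  congr 1
  · congr 1
    exact Finset.sum_congr rfl fun j _ => by ring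
  · exact Finset.sum_congr rfl fun i _ => Finset.sum_congr rfl fun j _ => by ring

theorem integral_sub_sum_mul_sq {X : Ω → ℝ} {Z : ι → Ω → ℝ} (hX : MemLp X 2 μ)
    (hZ : ∀ j, MemLp (Z j) 2 μ) (γ : ι → ℝ) :
    ∫ ω, (X ω - ∑ j, γ j * Z j ω) ^ 2 ∂μ
      = ∫ ω, X ω ^ 2 ∂μ - 2 * (γ ⬝ᵥ fun j => ∫ ω, X ω * Z j ω ∂μ)
        + γ ⬝ᵥ secondMomentMatrix Z μ *ᵥ γ := by
  have hXZ : ∀ j, Integrable (fun ω => X ω * Z j ω) μ := fun j => hX.integrable_mul (hZ j)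
  have hZZ : ∀ i j, Integrable (fun ω => Z i ω * Z j ω) μ :=
    fun i j => (hZ i).integrable_mul (hZ j)
  have hcross : Integrable (fun ω => ∑ j, γ j * (X ω * Z j ω)) μ :=
    integrable_finsetSum _ fun j _ => (hXZ j).const_mul _
  have hquad : Integrable (fun ω => ∑ i, γ i * ∑ j, Z i ω * Z j ω * γ j) μ :=
    integrable_finsetSum _ fun i _ =>
      (integrable_finsetSum _ fun j _ => (hZZ i j).mul_const _).const_mul _
  have hlin : Integrable (fun ω => X ω ^ 2 - 2 * ∑ j, γ j * (X ω * Z j ω)) μ :=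
    hX.integrable_sq.sub (hcross.const_mul 2)
  simp only [sub_sum_mul_sq_eq]
  rw [integral_add hlin hquad,
    integral_sub hX.integrable_sq (hcross.const_mul 2), integral_const_mul,
    integral_finsetSum _ fun j _ => (hXZ j).const_mul _,
    integral_finsetSum _ fun i _ =>
      (integrable_finsetSum _ fun j _ => (hZZ i j).mul_const _).const_mul _]
  simp only [integral_const_mul, dotProduct, mulVec, secondMomentMatrix, of_apply]
  congr
  ext i
  rw [integral_finsetSum _ fun j _ => (hZZ i j).mul_const _]
  simp only [integral_mul_const]

theorem posSemidef_secondMomentMatrix {Z : ι → Ω → ℝ} (hZ : ∀ j, MemLp (Z j) 2 μ) :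
    (secondMomentMatrix Z μ).PosSemidef := by
  refine .of_dotProduct_mulVec_nonneg (isHermitian_iff_isSymm.2 <| IsSymm.ext fun i j => ?_)
    fun γ => ?_
  · simp only [secondMomentMatrix, of_apply, mul_comm]
  -- `X = 0` in the expansion gives `γᵀ M γ = E[(γᵀ Z)²]`.
  · have h := integral_sub_sum_mul_sq MemLp.zero' hZ γ
    simp only [zero_sub, neg_sq, ne_eq, OfNat.ofNat_ne_zero, not_false_eq_true, zero_pow,
      integral_zero, zero_mul, dotProduct_zero', mul_zero, sub_self, zero_add] at h
    rw [star_trivial, ← h]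
    exact integral_nonneg fun ω => sq_nonneg _

theorem integral_sub_sum_mul_sq_eq_of_isUnit_det [DecidableEq ι] {X : Ω → ℝ}
    {Z : ι → Ω → ℝ} (hX : MemLp X 2 μ) (hZ : ∀ j, MemLp (Z j) 2 μ)
    (hdet : IsUnit (secondMomentMatrix Z μ).det) (γ : ι → ℝ) :
    let M := secondMomentMatrix Z μ
    let c := fun j => ∫ ω, X ω * Z j ω ∂μ
    ∫ ω, (X ω - ∑ j, γ j * Z j ω) ^ 2 ∂μ
      = ∫ ω, X ω ^ 2 ∂μ + ((γ - M⁻¹ *ᵥ c) ⬝ᵥ M *ᵥ (γ - M⁻¹ *ᵥ c) - c ⬝ᵥ M⁻¹ *ᵥ c) := by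
  intro M c
  have hM : M.IsSymm := isHermitian_iff_isSymm.1 (posSemidef_secondMomentMatrix hZ).1
  rw [integral_sub_sum_mul_sq hX hZ, ← hM.dotProduct_mulVec_sub_two_mul_dotProduct_eq hdet]
  ring

end SecondMoments

theorem ProbabilityTheory.covariance_eq_integral_mul_of_integral_eq_zero {Ω : Type*}
    [MeasurableSpace Ω] {μ : Measure Ω} [IsProbabilityMeasure μ] {X Y : Ω → ℝ} (hX : MemLp X 2 μ)
    (hY : MemLp Y 2 μ) (hY₀ : ∫ ω, Y ω ∂μ = 0) :
    cov[X, Y; μ] = ∫ ω, X ω * Y ω ∂μ := by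
  rw [covariance_eq_sub hX hY, hY₀, mul_zero, sub_zero]
  rfl

theorem ProbabilityTheory.IndepFun.covariance_eq_integral_sub_mul_sub {Ω : Type*}
    [MeasurableSpace Ω] {μ : Measure Ω} [IsProbabilityMeasure μ] {X Y₁ Y₂ : Ω → ℝ}
    (hXY₂ : IndepFun X Y₂ μ) (hX : MemLp X 2 μ) (hY₁ : MemLp Y₁ 2 μ) (hY₂ : MemLp Y₂ 2 μ)
    (hY : ∫ ω, (Y₁ ω - Y₂ ω) ∂μ = 0) (c : ℝ) :
    cov[X, Y₁; μ] = ∫ ω, (X ω - c) * (Y₁ ω - Y₂ ω) ∂μ := calc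
  cov[X, Y₁; μ] = cov[X, fun ω => Y₁ ω - Y₂ ω; μ] := by
    rw [covariance_fun_sub_right hX hY₁ hY₂, hXY₂.covariance_eq_zero hX hY₂, sub_zero]
  _ = cov[fun ω => X ω - c, fun ω => Y₁ ω - Y₂ ω; μ] :=
    (covariance_sub_const_left (hX.integrable one_le_two) c).symm
  _ = _ := covariance_eq_integral_mul_of_integral_eq_zero (hX.sub (memLp_const c))
    (hY₁.sub hY₂) hY

theorem stmt1_general {Ωs : Type*} [MeasurableSpace Ωs] (P : Measure Ωs) [IsProbabilityMeasure P]
    (k : ℕ) (θ : ℝ) (θhat0 : Ωs → ℝ) (θhat0M θhatM : Ωs → Fin k → ℝ)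
    (hL2_0 : MemLp θhat0 2 P)
    (hL2_0M : ∀ j, MemLp (fun ω => θhat0M ω j) 2 P)
    (hL2_M : ∀ j, MemLp (fun ω => θhatM ω j) 2 P)
    (hindep : IndepFun (fun ω => (θhat0 ω, θhat0M ω)) θhatM P)
    (hB : ∀ j, (∫ ω, (θhat0M ω j - θhatM ω j) ∂P) = 0)
    (Λ : Matrix (Fin k) (Fin k) ℝ)
    (hΛ : ∀ i j, Λ i j =
      cov P (fun ω => θhat0M ω i - θhatM ω i) (fun ω => θhat0M ω j - θhatM ω j))
    (hΛinv : IsUnit Λ.det)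
    (Ωv : Fin k → ℝ) (hΩ : ∀ j, Ωv j = cov P θhat0 (fun ω => θhat0M ω j))
    (γstar : Fin k → ℝ) (hγstar : γstar = Λ⁻¹.mulVec Ωv) :
    ((∫ ω, (θhat0 ω - (∑ j, γstar j * (θhat0M ω j - θhatM ω j)) - θ) ^ 2 ∂P)
        - (∫ ω, (θhat0 ω - θ) ^ 2 ∂P) = -(Ωv ⬝ᵥ Λ⁻¹.mulVec Ωv))
      ∧ -(Ωv ⬝ᵥ Λ⁻¹.mulVec Ωv) ≤ 0
      ∧ ∀ γ : Fin k → ℝ,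
          (∫ ω, (θhat0 ω - (∑ j, γstar j * (θhat0M ω j - θhatM ω j)) - θ) ^ 2 ∂P)
            ≤ ∫ ω, (θhat0 ω - (∑ j, γ j * (θhat0M ω j - θhatM ω j)) - θ) ^ 2 ∂P := by
  set Z : Fin k → Ωs → ℝ := fun j ω => θhat0M ω j - θhatM ω j
  have hZ : ∀ j, MemLp (Z j) 2 P := fun j => (hL2_0M j).sub (hL2_M j)
  have hΛZ : Λ = secondMomentMatrix Z P := by
    ext i j
    exact (hΛ i j).trans <| covariance_eq_integral_mul_of_integral_eq_zero (hZ i) (hZ j) (hB j)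
  have hΩZ : Ωv = fun j => ∫ ω, (θhat0 ω - θ) * Z j ω ∂P := funext fun j =>
    (hΩ j).trans <|
      (hindep.comp measurable_fst (measurable_pi_apply j)).covariance_eq_integral_sub_mul_sub
        hL2_0 (hL2_0M j) (hL2_M j) (hB j) θ
  have hΛpsd : Λ.PosSemidef := hΛZ ▸ posSemidef_secondMomentMatrix hZ
  have hMSE : ∀ γ, ∫ ω, (θhat0 ω - (∑ j, γ j * (θhat0M ω j - θhatM ω j)) - θ) ^ 2 ∂P
      = ∫ ω, (θhat0 ω - θ) ^ 2 ∂P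
        + ((γ - γstar) ⬝ᵥ Λ *ᵥ (γ - γstar) - Ωv ⬝ᵥ Λ⁻¹ *ᵥ Ωv) := by
    intro γ
    subst hΛZ hΩZ hγstar
    calc _ = ∫ ω, (θhat0 ω - θ - ∑ j, γ j * Z j ω) ^ 2 ∂P := by
          congr 1 with ω
          ring
      _ = _ := integral_sub_sum_mul_sq_eq_of_isUnit_det (hL2_0.sub (memLp_const θ)) hZ hΛinv γ
  refine ⟨by simp [hMSE], neg_nonpos.2 ?_, fun γ => ?_⟩
  · simpa using hΛpsd.inv.dotProduct_mulVec_nonneg Ωv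
  · rw [hMSE, hMSE, sub_self, zero_dotProduct]
    simpa using hΛpsd.dotProduct_mulVec_nonneg (γ - γstar)

/-- **Proposition 1, second part.** CAM setup: on a probability space, let
`θ ∈ ℝ` be a fixed parameter, `θ̂₀` a square-integrable real random variable, and
`θ̂₀M, θ̂M` square-integrable random vectors in `ℝ^k` such that `θ̂M` is independent of
the pair `(θ̂₀, θ̂₀M)`.  For `γ ∈ ℝ^k` the CAM estimator is
`θ̂_γ := θ̂₀ − γᵀ(θ̂₀M − θ̂M)` and `MSE(θ̂) := E[(θ̂ − θ)²]`.  Assume in addition that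
`B := E(θ̂₀M − θ̂M) = 0` and `Λ := Var(θ̂₀M − θ̂M)` is nonsingular.  Then
`γ* := Λ⁻¹Ω` satisfies `MSE(θ̂_{γ*}) − MSE(θ̂₀) = −ΩᵀΛ⁻¹Ω ≤ 0`, and
`MSE(θ̂_{γ*}) ≤ MSE(θ̂_γ)` for every `γ ∈ ℝ^k`. -/
theorem stmt1 {Ωs : Type*} [MeasurableSpace Ωs] (P : Measure Ωs) [IsProbabilityMeasure P]
    (k : ℕ) (θ : ℝ) (θhat0 : Ωs → ℝ) (θhat0M θhatM : Ωs → Fin k → ℝ)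
    (hmeas0 : Measurable θhat0) (hmeas0M : Measurable θhat0M) (hmeasM : Measurable θhatM)
    (hL2_0 : MemLp θhat0 2 P)
    (hL2_0M : ∀ j, MemLp (fun ω => θhat0M ω j) 2 P)
    (hL2_M : ∀ j, MemLp (fun ω => θhatM ω j) 2 P)
    (hindep : IndepFun (fun ω => (θhat0 ω, θhat0M ω)) θhatM P)
    (hB : ∀ j, (∫ ω, (θhat0M ω j - θhatM ω j) ∂P) = 0)
    (Λ : Matrix (Fin k) (Fin k) ℝ)
    (hΛ : ∀ i j, Λ i j =
      cov P (fun ω => θhat0M ω i - θhatM ω i) (fun ω => θhat0M ω j - θhatM ω j))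
    (hΛinv : IsUnit Λ.det)
    (Ωv : Fin k → ℝ) (hΩ : ∀ j, Ωv j = cov P θhat0 (fun ω => θhat0M ω j))
    (γstar : Fin k → ℝ) (hγstar : γstar = Λ⁻¹.mulVec Ωv) :
    ((∫ ω, (θhat0 ω - (∑ j, γstar j * (θhat0M ω j - θhatM ω j)) - θ) ^ 2 ∂P)
        - (∫ ω, (θhat0 ω - θ) ^ 2 ∂P) = -(Ωv ⬝ᵥ Λ⁻¹.mulVec Ωv))
      ∧ -(Ωv ⬝ᵥ Λ⁻¹.mulVec Ωv) ≤ 0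
      ∧ ∀ γ : Fin k → ℝ,
          (∫ ω, (θhat0 ω - (∑ j, γstar j * (θhat0M ω j - θhatM ω j)) - θ) ^ 2 ∂P)
            ≤ ∫ ω, (θhat0 ω - (∑ j, γ j * (θhat0M ω j - θhatM ω j)) - θ) ^ 2 ∂P :=
  stmt1_general P k θ θhat0 θhat0M θhatM hL2_0 hL2_0M hL2_M hindep hB Λ hΛ hΛinv Ωv hΩ γstar hγstar
end

section
/- In the scalar CAM setup with E(θ̂_{0,m}) = E(θ̂_m), Var(θ̂₀) > 0, Var(θ̂_{0,m}) > 0 and Var(θ̂_{0,m}) + Var(θ̂_m) > 0, the optimal weight γ* := Cov(θ̂₀, θ̂_{0,m}) / (Var(θ̂_{0,m}) + Var(θ̂_m)) satisfies MSE(θ̂_{γ*}) − MSE(θ̂₀) = −Var(θ̂₀) · [Var(θ̂_{0,m}) / (Var(θ̂_{0,m}) + Var(θ̂_m))] · Corr²(θ̂₀, θ̂_{0,m}), where Corr denotes the Pearson correlation. -/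
open MeasureTheory ProbabilityTheory
open scoped NNReal ENNReal

/-- Variance of a real random variable. -/
noncomputable def var {Ωs : Type*} [MeasurableSpace Ωs] (μ : Measure Ωs) (f : Ωs → ℝ) : ℝ :=
  cov μ f f

/-- Pearson correlation of two real random variables. -/
noncomputable def corr {Ωs : Type*} [MeasurableSpace Ωs] (μ : Measure Ωs) (f g : Ωs → ℝ) : ℝ :=
  cov μ f g / Real.sqrt (var μ f * var μ g)

/-!
Since `E θ̂₀m = E θ̂m`, every CAM estimator has the same mean as `θ̂₀`, so by the
bias–variance decomposition the MSE difference is a difference of variances. Independence of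
`θ̂m` from `(θ̂₀, θ̂₀m)` gives `Var θ̂_γ = Var θ̂₀ − 2γ Cov(θ̂₀, θ̂₀m) + γ²(Var θ̂₀m + Var θ̂m)`,
a quadratic in `γ` whose value at its minimiser `γ*` is `−Cov(θ̂₀, θ̂₀m)² / (Var θ̂₀m + Var θ̂m)`.
-/

section Moments

variable {Ω : Type*} [MeasurableSpace Ω] {μ : Measure Ω} {X Y Z : Ω → ℝ}

lemma cov_eq_covariance (X Y : Ω → ℝ) (μ : Measure Ω) : cov μ X Y = cov[X, Y; μ] := rfl

lemma var_eq_variance (hX : AEMeasurable X μ) : var μ X = Var[X; μ] := covariance_self hX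

lemma corr_sq (X Y : Ω → ℝ) (μ : Measure Ω) :
    corr μ X Y ^ 2 = cov μ X Y ^ 2 / (var μ X * var μ Y) := by
  have var_nonneg (W : Ω → ℝ) : 0 ≤ var μ W := integral_nonneg fun _ ↦ mul_self_nonneg _
  rw [corr, div_pow, Real.sq_sqrt (mul_nonneg (var_nonneg X) (var_nonneg Y))]

lemma integral_sub_mul_sub_of_integral_eq (hX : Integrable X μ) (hY : Integrable Y μ)
    (hZ : Integrable Z μ) (h : μ[Y] = μ[Z]) (γ : ℝ) :
    ∫ ω, X ω - γ * (Y ω - Z ω) ∂μ = μ[X] := by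
  rw [integral_sub (g := fun ω ↦ γ * (Y ω - Z ω)) hX ((hY.sub hZ).const_mul γ),
    integral_const_mul, integral_sub hY hZ, h, sub_self, mul_zero, sub_zero]

variable [IsProbabilityMeasure μ]

lemma integral_sub_const_sq (hX : MemLp X 2 μ) (c : ℝ) :
    ∫ ω, (X ω - c) ^ 2 ∂μ = Var[X; μ] + (μ[X] - c) ^ 2 := by
  have hXc : MemLp (fun ω ↦ X ω - c) 2 μ := hX.sub (memLp_const c)
  have mean : ∫ ω, (X ω - c) ∂μ = μ[X] - c := by
    rw [integral_sub (hX.integrable one_le_two) (integrable_const c), integral_const]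
    simp
  rw [← variance_sub_const hX.aestronglyMeasurable c, variance_eq_sub hXc]
  simp only [Pi.pow_apply, mean]
  ring

lemma integral_sub_const_sq_sub_of_integral_eq (hX : MemLp X 2 μ) (hY : MemLp Y 2 μ)
    (h : μ[X] = μ[Y]) (c : ℝ) :
    ∫ ω, (X ω - c) ^ 2 ∂μ - ∫ ω, (Y ω - c) ^ 2 ∂μ = Var[X; μ] - Var[Y; μ] := by
  rw [integral_sub_const_sq hX, integral_sub_const_sq hY, h]
  ring

lemma variance_sub_mul_sub_of_indepFun (hX : MemLp X 2 μ) (hY : MemLp Y 2 μ) (hZ : MemLp Z 2 μ)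
    (hXZ : IndepFun X Z μ) (hYZ : IndepFun Y Z μ) (γ : ℝ) :
    Var[fun ω ↦ X ω - γ * (Y ω - Z ω); μ]
      = Var[X; μ] - 2 * γ * cov[X, Y; μ] + γ ^ 2 * (Var[Y; μ] + Var[Z; μ]) := by
  have hYsubZ : MemLp (fun ω ↦ Y ω - Z ω) 2 μ := hY.sub hZ
  rw [variance_fun_sub hX (hYsubZ.const_mul γ), variance_const_mul, covariance_const_mul_right,
    covariance_fun_sub_right hX hY hZ, variance_fun_sub hY hZ,
    hXZ.covariance_eq_zero hX hZ, hYZ.covariance_eq_zero hY hZ]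
  ring

end Moments

theorem stmt2_general {Ωs : Type*} [MeasurableSpace Ωs] (P : Measure Ωs) [IsProbabilityMeasure P]
    (θ : ℝ) (θhat0 θhat0m θhatm : Ωs → ℝ)
    (hL2_0 : MemLp θhat0 2 P) (hL2_0m : MemLp θhat0m 2 P) (hL2_m : MemLp θhatm 2 P)
    (hindep : IndepFun (fun ω => (θhat0 ω, θhat0m ω)) θhatm P)
    (hmean : (∫ ω, θhat0m ω ∂P) = ∫ ω, θhatm ω ∂P)
    (hv0 : 0 < var P θhat0) (hv0m : 0 < var P θhat0m)
    (hvsum : 0 < var P θhat0m + var P θhatm)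
    (γstar : ℝ) (hγstar : γstar = cov P θhat0 θhat0m / (var P θhat0m + var P θhatm)) :
    (∫ ω, (θhat0 ω - γstar * (θhat0m ω - θhatm ω) - θ) ^ 2 ∂P)
        - (∫ ω, (θhat0 ω - θ) ^ 2 ∂P)
      = -(var P θhat0 * (var P θhat0m / (var P θhat0m + var P θhatm))
            * (corr P θhat0 θhat0m) ^ 2) := by
  have hcam : MemLp (fun ω ↦ θhat0 ω - γstar * (θhat0m ω - θhatm ω)) 2 P :=
    hL2_0.sub ((hL2_0m.sub hL2_m).const_mul γstar)
  have same_mean := integral_sub_mul_sub_of_integral_eq (hL2_0.integrable one_le_two)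
    (hL2_0m.integrable one_le_two) (hL2_m.integrable one_le_two) hmean γstar
  rw [integral_sub_const_sq_sub_of_integral_eq hcam hL2_0 same_mean,
    variance_sub_mul_sub_of_indepFun hL2_0 hL2_0m hL2_m
      (hindep.comp measurable_fst measurable_id) (hindep.comp measurable_snd measurable_id),
    ← cov_eq_covariance, ← var_eq_variance hL2_0.aemeasurable,
    ← var_eq_variance hL2_0m.aemeasurable, ← var_eq_variance hL2_m.aemeasurable, corr_sq, hγstar]
  field_simp
  ring

/-- Scalar CAM setup: on a probability space, `θ ∈ ℝ` is a fixed
parameter, `θ̂₀, θ̂₀m, θ̂m` are square-integrable real random variables with `θ̂m`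
independent of the pair `(θ̂₀, θ̂₀m)`; for `γ ∈ ℝ` the CAM estimator is
`θ̂_γ := θ̂₀ − γ(θ̂₀m − θ̂m)` and `MSE(θ̂) := E[(θ̂ − θ)²]`.  If `E θ̂₀m = E θ̂m`,
`Var θ̂₀ > 0`, `Var θ̂₀m > 0` and `Var θ̂₀m + Var θ̂m > 0`, then the optimal weight
`γ* := Cov(θ̂₀, θ̂₀m)/(Var θ̂₀m + Var θ̂m)` satisfies
`MSE(θ̂_{γ*}) − MSE(θ̂₀) = −Var θ̂₀ · (Var θ̂₀m/(Var θ̂₀m + Var θ̂m)) · Corr²(θ̂₀, θ̂₀m)`. -/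
theorem stmt2 {Ωs : Type*} [MeasurableSpace Ωs] (P : Measure Ωs) [IsProbabilityMeasure P]
    (θ : ℝ) (θhat0 θhat0m θhatm : Ωs → ℝ)
    (hmeas0 : Measurable θhat0) (hmeas0m : Measurable θhat0m) (hmeasm : Measurable θhatm)
    (hL2_0 : MemLp θhat0 2 P) (hL2_0m : MemLp θhat0m 2 P) (hL2_m : MemLp θhatm 2 P)
    (hindep : IndepFun (fun ω => (θhat0 ω, θhat0m ω)) θhatm P)
    (hmean : (∫ ω, θhat0m ω ∂P) = ∫ ω, θhatm ω ∂P)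
    (hv0 : 0 < var P θhat0) (hv0m : 0 < var P θhat0m)
    (hvsum : 0 < var P θhat0m + var P θhatm)
    (γstar : ℝ) (hγstar : γstar = cov P θhat0 θhat0m / (var P θhat0m + var P θhatm)) :
    (∫ ω, (θhat0 ω - γstar * (θhat0m ω - θhatm ω) - θ) ^ 2 ∂P)
        - (∫ ω, (θhat0 ω - θ) ^ 2 ∂P)
      = -(var P θhat0 * (var P θhat0m / (var P θhat0m + var P θhatm))
            * (corr P θhat0 θhat0m) ^ 2) :=
  stmt2_general P θ θhat0 θhat0m θhatm hL2_0 hL2_0m hL2_m hindep hmean hv0 hv0m hvsum γstar hγstar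
end

section
/- In the marginal mean estimation setting, for any measurable φ₁ : ℝ → ℝ with 0 < Var(φ₁(Y)) < ∞, the optimal weight γ* := n₁·Cov(X, φ₁(Y)) / (n·Var(φ₁(Y))) satisfies MSE(θ̂_{γ*}) − MSE(θ̂₀) = Var(θ̂_{γ*}) − Var(θ̂₀) = −n₁·Cov(X, φ₁(Y))² / (n₀·n·Var(φ₁(Y))). -/
/-!
For every `γ`, `θ̂_γ` is unbiased, so its mean squared error is its variance. Moreover
`θ̂_γ = mean_{A₀}(X - γ φ₁(Y)) + γ · mean_{A₁} φ₁(Y)`, and the two sample means are built from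
disjoint blocks of i.i.d. pairs, hence independent. Therefore
`Var θ̂_γ = (Var X - 2γ Cov(X, φ₁(Y)) + γ² Var φ₁(Y)) / n₀ + γ² Var φ₁(Y) / n₁`,
a quadratic in `γ` whose value at `γ = 0` is `Var θ̂₀`; evaluating the difference at its
minimiser `γ*` gives the claim.
-/

open MeasureTheory ProbabilityTheory Finset

noncomputable def sampleMean {Ω ι β : Type*} (W : ι → Ω → β) (g : β → ℝ) (s : Finset ι)
    (ω : Ω) : ℝ :=
  (∑ i ∈ s, g (W i ω)) / #s

lemma sampleMean_sub_const_mul {Ω ι β : Type*} (W : ι → Ω → β) (g h : β → ℝ) (s : Finset ι)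
    (γ : ℝ) (ω : Ω) :
    sampleMean W g s ω - γ * sampleMean W h s ω = sampleMean W (fun w => g w - γ * h w) s ω := by
  simp only [sampleMean, sum_sub_distrib, ← mul_sum]
  ring

lemma var_eq_variance_s7 {Ω : Type*} [MeasurableSpace Ω] {μ : Measure Ω} {f : Ω → ℝ}
    (hf : AEMeasurable f μ) : var μ f = variance f μ :=
  covariance_self hf

lemma integral_sub_sq_eq_variance {Ω : Type*} [MeasurableSpace Ω] {μ : Measure Ω} {f : Ω → ℝ}
    {θ : ℝ} (hf : AEMeasurable f μ) (hθ : ∫ ω, f ω ∂μ = θ) :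
    ∫ ω, (f ω - θ) ^ 2 ∂μ = variance f μ := by
  rw [variance_eq_integral hf, hθ]

lemma variance_sub_const_mul {Ω : Type*} [MeasurableSpace Ω] {μ : Measure Ω} [IsFiniteMeasure μ]
    {X Z : Ω → ℝ} (hX : MemLp X 2 μ) (hZ : MemLp Z 2 μ) (γ : ℝ) :
    variance (fun ω => X ω - γ * Z ω) μ
      = variance X μ - 2 * γ * covariance X Z μ + γ ^ 2 * variance Z μ := by
  rw [variance_fun_sub hX (hZ.const_mul γ), covariance_const_mul_right, variance_const_mul]
  ring

section SampleMean

variable {Ω ι β : Type*} [MeasurableSpace Ω] [MeasurableSpace β] {P : Measure Ω}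
  {W : ι → Ω → β} {i₀ : ι} {g h : β → ℝ} {s t : Finset ι}

lemma memLp_sampleMean (hident : ∀ i, IdentDistrib (W i) (W i₀) P P) (hg : Measurable g)
    (hL2 : MemLp (fun ω => g (W i₀ ω)) 2 P) : MemLp (sampleMean W g s) 2 P := by
  have hsum : MemLp (fun ω => ∑ i ∈ s, g (W i ω)) 2 P :=
    memLp_finsetSum s fun i _ => ((hident i).comp hg).memLp_iff.mpr hL2
  unfold sampleMean
  simpa only [div_eq_mul_inv] using hsum.mul_const (#s : ℝ)⁻¹

lemma integral_sampleMean (hident : ∀ i, IdentDistrib (W i) (W i₀) P P) (hg : Measurable g)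
    (hint : Integrable (fun ω => g (W i₀ ω)) P) (hs : s.Nonempty) :
    ∫ ω, sampleMean W g s ω ∂P = ∫ ω, g (W i₀ ω) ∂P := by
  have hcomp : ∀ i, IdentDistrib (fun ω => g (W i ω)) (fun ω => g (W i₀ ω)) P P :=
    fun i => (hident i).comp hg
  unfold sampleMean
  rw [integral_div, integral_finsetSum s fun i _ => (hcomp i).integrable_iff.mpr hint,
    sum_congr rfl fun i _ => (hcomp i).integral_eq, sum_const, nsmul_eq_mul]
  field_simp [hs.card_pos.ne']

lemma variance_sampleMean (hindep : iIndepFun W P) (hident : ∀ i, IdentDistrib (W i) (W i₀) P P)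
    (hg : Measurable g) (hL2 : MemLp (fun ω => g (W i₀ ω)) 2 P) :
    variance (sampleMean W g s) P = variance (fun ω => g (W i₀ ω)) P / #s := by
  have hcomp : ∀ i, IdentDistrib (fun ω => g (W i ω)) (fun ω => g (W i₀ ω)) P P :=
    fun i => (hident i).comp hg
  have hsum := IndepFun.variance_sum (X := fun i ω => g (W i ω)) (s := s)
    (fun i _ => (hcomp i).memLp_iff.mpr hL2) fun i _ j _ hij => (hindep.indepFun hij).comp hg hg
  rw [sum_fn, sum_congr rfl fun i _ => (hcomp i).variance_eq, sum_const, nsmul_eq_mul] at hsum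
  unfold sampleMean
  simp_rw [div_eq_mul_inv]
  rw [variance_mul_const, hsum]
  rcases eq_or_ne (#s : ℝ) 0 with hs | hs
  · simp [hs] -- for `s = ∅` both sides are `0`, as `x / 0 = 0`
  · field_simp

lemma indepFun_sampleMean (hmeas : ∀ i, AEMeasurable (W i) P) (hindep : iIndepFun W P)
    (hst : Disjoint s t) (hg : Measurable g) (hh : Measurable h) :
    IndepFun (sampleMean W g s) (sampleMean W h t) P := by
  have hmean : ∀ (u : Finset ι) {f : β → ℝ}, Measurable f →
      Measurable fun x : u → β => (∑ i, f (x i)) / #u :=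
    fun u f hf => (Finset.measurable_sum _ fun i _ => hf.comp (measurable_pi_apply i)).div_const _
  convert (hindep.indepFun_finset₀ s t hst hmeas).comp (hmean s hg) (hmean t hh) using 1 <;>
    funext ω <;> simp only [sampleMean, Function.comp_apply] <;> rw [← sum_coe_sort]

end SampleMean

section ControlVariate

variable {Ω ι β : Type*} [MeasurableSpace Ω] [MeasurableSpace β] {P : Measure Ω}
  [IsFiniteMeasure P] {W : ι → Ω → β} {i₀ : ι} {X Z : β → ℝ} {A₀ A₁ : Finset ι}

lemma integral_cam (hident : ∀ i, IdentDistrib (W i) (W i₀) P P) (hX : Measurable X)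
    (hZ : Measurable Z) (hXL2 : MemLp (fun ω => X (W i₀ ω)) 2 P)
    (hZL2 : MemLp (fun ω => Z (W i₀ ω)) 2 P) (hA₀ : A₀.Nonempty) (hA₁ : A₁.Nonempty) (γ : ℝ) :
    ∫ ω, sampleMean W X A₀ ω - γ * (sampleMean W Z A₀ ω - sampleMean W Z A₁ ω) ∂P
      = ∫ ω, X (W i₀ ω) ∂P := by
  have hint : ∀ {f : β → ℝ} {A : Finset ι}, Measurable f → MemLp (fun ω => f (W i₀ ω)) 2 P →
      Integrable (sampleMean W f A) P :=
    fun hf hL2 => (memLp_sampleMean hident hf hL2).integrable one_le_two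
  have hdiff : Integrable (fun ω => sampleMean W Z A₀ ω - sampleMean W Z A₁ ω) P :=
    (hint hZ hZL2).sub (hint hZ hZL2)
  rw [integral_sub (hint hX hXL2) (hdiff.const_mul γ), integral_const_mul,
    integral_sub (hint hZ hZL2) (hint hZ hZL2),
    integral_sampleMean hident hX (hXL2.integrable one_le_two) hA₀,
    integral_sampleMean hident hZ (hZL2.integrable one_le_two) hA₀,
    integral_sampleMean hident hZ (hZL2.integrable one_le_two) hA₁]
  ring

lemma variance_cam (hmeas : ∀ i, AEMeasurable (W i) P) (hindep : iIndepFun W P)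
    (hident : ∀ i, IdentDistrib (W i) (W i₀) P P) (hX : Measurable X) (hZ : Measurable Z)
    (hXL2 : MemLp (fun ω => X (W i₀ ω)) 2 P) (hZL2 : MemLp (fun ω => Z (W i₀ ω)) 2 P)
    (hdisj : Disjoint A₀ A₁) (γ : ℝ) :
    variance (fun ω => sampleMean W X A₀ ω - γ * (sampleMean W Z A₀ ω - sampleMean W Z A₁ ω)) P
      = (variance (fun ω => X (W i₀ ω)) P
          - 2 * γ * covariance (fun ω => X (W i₀ ω)) (fun ω => Z (W i₀ ω)) P
          + γ ^ 2 * variance (fun ω => Z (W i₀ ω)) P) / #A₀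
        + γ ^ 2 * variance (fun ω => Z (W i₀ ω)) P / #A₁ := by
  have hY : Measurable fun w => X w - γ * Z w := hX.sub (hZ.const_mul γ)
  have hsplit : (fun ω => sampleMean W X A₀ ω - γ * (sampleMean W Z A₀ ω - sampleMean W Z A₁ ω))
      = fun ω => sampleMean W (fun w => X w - γ * Z w) A₀ ω + γ * sampleMean W Z A₁ ω := by
    funext ω
    rw [← sampleMean_sub_const_mul]
    ring
  rw [hsplit, IndepFun.variance_fun_add
      (memLp_sampleMean hident hY (hXL2.sub (hZL2.const_mul γ)))
      ((memLp_sampleMean hident hZ hZL2).const_mul γ)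
      ((indepFun_sampleMean hmeas hindep hdisj hY hZ).comp measurable_id
        (measurable_const_mul γ)),
    variance_const_mul, variance_sampleMean hindep hident hY (hXL2.sub (hZL2.const_mul γ)),
    variance_sampleMean hindep hident hZ hZL2, variance_sub_const_mul hXL2 hZL2]
  ring

end ControlVariate

/-- Marginal mean estimation: let `(X_i,Y_i)` be i.i.d. square-integrable
pairs in `ℝ²`, let `A₀, A₁` be disjoint finite index sets of sizes `n₀, n₁ ≥ 1`,
`n := n₀ + n₁`, and `θ := E X`.  With `θ̂₀ := n₀⁻¹Σ_{A₀} X_i`,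
`θ̂₀₁ := n₀⁻¹Σ_{A₀} φ₁(Y_i)`, `θ̂₁ := n₁⁻¹Σ_{A₁} φ₁(Y_i)` and
`θ̂_γ := θ̂₀ − γ(θ̂₀₁ − θ̂₁)`, for any measurable `φ₁` with `0 < Var φ₁(Y) < ∞`
the optimal weight `γ* := n₁·Cov(X, φ₁(Y))/(n·Var φ₁(Y))` satisfies
`MSE(θ̂_{γ*}) − MSE(θ̂₀) = Var(θ̂_{γ*}) − Var(θ̂₀)
  = −n₁·Cov(X, φ₁(Y))²/(n₀·n·Var φ₁(Y))`. -/
theorem stmt7 {Ωs : Type*} [MeasurableSpace Ωs] (P : Measure Ωs) [IsProbabilityMeasure P]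
    (W : ℕ → Ωs → ℝ × ℝ) (hmeas : ∀ i, Measurable (W i))
    (hindep : iIndepFun W P)
    (hident : ∀ i, IdentDistrib (W i) (W 0) P P)
    (hL2 : MemLp (W 0) 2 P)
    (A0 A1 : Finset ℕ) (hdisj : Disjoint A0 A1)
    (n0 n1 : ℕ) (hcard0 : A0.card = n0) (hcard1 : A1.card = n1)
    (hn0 : 1 ≤ n0) (hn1 : 1 ≤ n1)
    (φ1 : ℝ → ℝ) (hφ1 : Measurable φ1)
    (hφ1L2 : MemLp (fun ω => φ1 (W 0 ω).2) 2 P)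
    (hvar : 0 < var P (fun ω => φ1 (W 0 ω).2))
    (θ : ℝ) (hθ : θ = ∫ ω, (W 0 ω).1 ∂P)
    (θhat0 θhat01 θhat1 : Ωs → ℝ)
    (h0 : θhat0 = fun ω => (∑ i ∈ A0, (W i ω).1) / n0)
    (h01 : θhat01 = fun ω => (∑ i ∈ A0, φ1 (W i ω).2) / n0)
    (h1 : θhat1 = fun ω => (∑ i ∈ A1, φ1 (W i ω).2) / n1)
    (γstar : ℝ)
    (hγstar : γstar = n1 * cov P (fun ω => (W 0 ω).1) (fun ω => φ1 (W 0 ω).2)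
        / ((n0 + n1 : ℕ) * var P (fun ω => φ1 (W 0 ω).2))) :
    ((∫ ω, (θhat0 ω - γstar * (θhat01 ω - θhat1 ω) - θ) ^ 2 ∂P)
        - (∫ ω, (θhat0 ω - θ) ^ 2 ∂P)
      = var P (fun ω => θhat0 ω - γstar * (θhat01 ω - θhat1 ω)) - var P θhat0)
    ∧ var P (fun ω => θhat0 ω - γstar * (θhat01 ω - θhat1 ω)) - var P θhat0
      = -(n1 * (cov P (fun ω => (W 0 ω).1) (fun ω => φ1 (W 0 ω).2)) ^ 2
            / (n0 * (n0 + n1 : ℕ) * var P (fun ω => φ1 (W 0 ω).2))) := by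
  obtain rfl : θhat0 = sampleMean W Prod.fst A0 := by rw [h0, ← hcard0]; rfl
  obtain rfl : θhat01 = sampleMean W (fun w => φ1 w.2) A0 := by rw [h01, ← hcard0]; rfl
  obtain rfl : θhat1 = sampleMean W (fun w => φ1 w.2) A1 := by rw [h1, ← hcard1]; rfl
  subst hcard0 hcard1 hθ
  have hZ : Measurable fun w : ℝ × ℝ => φ1 w.2 := hφ1.comp measurable_snd
  have hA0 : A0.Nonempty := card_pos.mp hn0
  have hA1 : A1.Nonempty := card_pos.mp hn1
  have hXL2 : MemLp (fun ω => (W 0 ω).1) 2 P := hL2.fst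
  have hbase_meas : AEMeasurable (sampleMean W Prod.fst A0) P :=
    (memLp_sampleMean hident measurable_fst hXL2).aemeasurable
  have hcam_meas : AEMeasurable (fun ω => sampleMean W Prod.fst A0 ω
      - γstar * (sampleMean W (fun w => φ1 w.2) A0 ω - sampleMean W (fun w => φ1 w.2) A1 ω)) P :=
    hbase_meas.sub (((memLp_sampleMean hident hZ hφ1L2).aemeasurable.sub
      (memLp_sampleMean hident hZ hφ1L2).aemeasurable).const_mul γstar)
  refine ⟨?_, ?_⟩
  · rw [integral_sub_sq_eq_variance hcam_meas
        (integral_cam hident measurable_fst hZ hXL2 hφ1L2 hA0 hA1 γstar),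
      integral_sub_sq_eq_variance hbase_meas
        (integral_sampleMean hident measurable_fst (hXL2.integrable one_le_two) hA0),
      var_eq_variance_s7 hcam_meas, var_eq_variance_s7 hbase_meas]
  · have hcov : cov P (fun ω => (W 0 ω).1) (fun ω => φ1 (W 0 ω).2)
        = covariance (fun ω => (W 0 ω).1) (fun ω => φ1 (W 0 ω).2) P := rfl
    rw [hcov, var_eq_variance_s7 hφ1L2.aemeasurable] at hγstar
    rw [var_eq_variance_s7 hφ1L2.aemeasurable] at hvar ⊢
    rw [var_eq_variance_s7 hcam_meas, var_eq_variance_s7 hbase_meas,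
      variance_cam (fun i => (hmeas i).aemeasurable) hindep hident measurable_fst hZ hXL2 hφ1L2
        hdisj,
      variance_sampleMean hindep hident measurable_fst hXL2, hcov, hγstar]
    push_cast
    field_simp
    ring
end

section
/- In the marginal mean estimation setting, take φ₁ to be a measurable version of the regression function, i.e. φ₁(Y) = E(X | Y) almost surely, and assume Var(E(X|Y)) > 0. Then with γ* := n₁·Cov(X, φ₁(Y)) / (n·Var(φ₁(Y))), the CAM estimator satisfies MSE(θ̂_{γ*}) − MSE(θ̂₀) = −(n₁/(n₀·n))·Var(E(X|Y)). -/
open MeasureTheory ProbabilityTheory Finset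
open scoped NNReal ENNReal BigOperators

/-!
Write `X = (W · ).1`, `Z = φ₁ ∘ (W · ).2`, `c = Cov(X, Z)`, `v = Var Z`. Then
`θ̂_γ - θ = U - γ D` with `U = θ̂₀ - θ` and `D = θ̂_{0,1} - θ̂₁`, both centred, so
`MSE(θ̂_γ) - MSE(θ̂₀) = γ² Var D - 2γ Cov(U, D)`. Because the samples are uncorrelated across
indices, `Var D = v/n₀ + v/n₁` and `Cov(U, D) = c/n₀`, and at `γ*` the difference is
`-n₁ c² / (n₀ n v)`. Finally `Z` is a version of `E[X | Y]`, so pulling `Z` out of the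
conditional expectation gives `c = v = Var E[X | Y]`.
-/

section Moments

variable {Ω : Type*} {mΩ : MeasurableSpace Ω} {P : Measure Ω}

lemma cov_eq_covariance_s8 (f g : Ω → ℝ) : cov P f g = cov[f, g; P] := rfl

lemma var_eq_covariance (f : Ω → ℝ) : var P f = cov[f, f; P] := rfl

lemma covariance_congr_ae {f f' g g' : Ω → ℝ} (hf : f =ᵐ[P] f') (hg : g =ᵐ[P] g') :
    cov[f, g; P] = cov[f', g'; P] := by
  unfold covariance
  rw [integral_congr_ae hf, integral_congr_ae hg]
  refine integral_congr_ae ?_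
  filter_upwards [hf, hg] with ω hfω hgω
  rw [hfω, hgω]

lemma integral_sub_sq_eq_covariance_self {Y : Ω → ℝ} {a : ℝ} (h : ∫ ω, Y ω ∂P = a) :
    ∫ ω, (Y ω - a) ^ 2 ∂P = cov[Y, Y; P] := by
  simp only [covariance, h, sq]

lemma integral_finsetSum_div_card {ι : Type*} {f : ι → Ω → ℝ} {s : Finset ι} {a : ℝ}
    (hs : s.Nonempty) (hf : ∀ i ∈ s, Integrable (f i) P) (ha : ∀ i ∈ s, ∫ ω, f i ω ∂P = a) :
    ∫ ω, (∑ i ∈ s, f i ω) / #s ∂P = a := by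
  rw [integral_div, integral_finsetSum s hf, Finset.sum_congr rfl ha, sum_const, nsmul_eq_mul,
    mul_div_cancel_left₀ _ (Nat.cast_ne_zero.mpr hs.card_pos.ne')]

lemma memLp_finsetSum_div_card {ι : Type*} {p : ℝ≥0∞} {f : ι → Ω → ℝ} (s : Finset ι)
    (hf : ∀ i ∈ s, MemLp (f i) p P) : MemLp (fun ω => (∑ i ∈ s, f i ω) / #s) p P := by
  simpa only [div_eq_mul_inv] using (memLp_finsetSum s hf).mul_const (#s : ℝ)⁻¹

lemma covariance_finsetSum_div_card_of_uncorrelated [IsFiniteMeasure P] {ι : Type*}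
    [DecidableEq ι] {X Y : ι → Ω → ℝ} {c : ℝ} (hX : ∀ i, MemLp (X i) 2 P)
    (hY : ∀ i, MemLp (Y i) 2 P) (hXY : ∀ i j, cov[X i, Y j; P] = if i = j then c else 0)
    (s t : Finset ι) :
    cov[fun ω => (∑ i ∈ s, X i ω) / #s, fun ω => (∑ j ∈ t, Y j ω) / #t; P]
      = #(s ∩ t) * c / (#s * #t) := by
  rw [covariance_fun_div_left, covariance_fun_div_right,
    covariance_fun_sum_fun_sum' (fun i _ => hX i) (fun j _ => hY j)]
  simp_rw [hXY, sum_ite_eq, ← sum_filter, filter_mem_eq_inter, sum_const, nsmul_eq_mul]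
  ring

lemma ProbabilityTheory.IdentDistrib.covariance_comp_eq {Ω' β : Type*} [MeasurableSpace Ω']
    [MeasurableSpace β] {P' : Measure Ω'} {V : Ω → β} {V' : Ω' → β} (h : IdentDistrib V V' P P')
    {ψ χ : β → ℝ} (hψ : Measurable ψ) (hχ : Measurable χ) :
    cov[fun ω => ψ (V ω), fun ω => χ (V ω); P]
      = cov[fun ω => ψ (V' ω), fun ω => χ (V' ω); P'] := by
  simp only [covariance]
  rw [show ∫ ω, ψ (V ω) ∂P = ∫ ω, ψ (V' ω) ∂P' from (h.comp hψ).integral_eq,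
    show ∫ ω, χ (V ω) ∂P = ∫ ω, χ (V' ω) ∂P' from (h.comp hχ).integral_eq]
  exact (h.comp ((hψ.sub_const _).mul (hχ.sub_const _))).integral_eq

lemma covariance_comp_of_iIndepFun_of_identDistrib {ι β : Type*}
    [MeasurableSpace β] [DecidableEq ι] {W : ι → Ω → β} {i₀ : ι} (hindep : iIndepFun W P)
    (hident : ∀ i, IdentDistrib (W i) (W i₀) P P) {ψ χ : β → ℝ} (hψ : Measurable ψ)
    (hχ : Measurable χ) (hψL2 : MemLp (fun ω => ψ (W i₀ ω)) 2 P)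
    (hχL2 : MemLp (fun ω => χ (W i₀ ω)) 2 P) (i j : ι) :
    cov[fun ω => ψ (W i ω), fun ω => χ (W j ω); P]
      = if i = j then cov[fun ω => ψ (W i₀ ω), fun ω => χ (W i₀ ω); P] else 0 := by
  split_ifs with hij
  · subst hij
    exact (hident i).covariance_comp_eq hψ hχ
  · exact ((hindep.indepFun hij).comp hψ hχ).covariance_eq_zero
      (((hident i).comp hψ).symm.memLp_snd hψL2) (((hident j).comp hχ).symm.memLp_snd hχL2)

lemma covariance_eq_covariance_self_of_ae_eq_condExp [IsProbabilityMeasure P]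
    {m : MeasurableSpace Ω} (hm : m ≤ mΩ) {X Z : Ω → ℝ} (hX : MemLp X 2 P)
    (hZ : MemLp Z 2 P) (hZm : StronglyMeasurable[m] Z) (hZX : Z =ᵐ[P] P[X | m]) :
    cov[X, Z; P] = cov[Z, Z; P] := by
  have hmean : P[X] = P[Z] :=
    (integral_condExp (μ := P) (f := X) hm).symm.trans (integral_congr_ae hZX.symm)
  have hpull : P[X * Z | m] =ᵐ[P] Z * Z := by
    filter_upwards [condExp_mul_of_stronglyMeasurable_right hZm (hX.integrable_mul hZ)
      (hX.integrable one_le_two), hZX] with ω hω hZω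
    rw [hω, Pi.mul_apply, Pi.mul_apply, hZω]
  have hsecond : P[X * Z] = P[Z * Z] :=
    (integral_condExp (μ := P) (f := X * Z) hm).symm.trans (integral_congr_ae hpull)
  rw [covariance_eq_sub hX hZ, covariance_eq_sub hZ hZ, hmean, hsecond]

end Moments

section ControlVariate

variable {Ω : Type*} {mΩ : MeasurableSpace Ω} {P : Measure Ω} [IsFiniteMeasure P]

lemma integral_sub_mul_sub_sq_sub_integral_sub_sq {T D : Ω → ℝ} {θ : ℝ} (hT : MemLp T 2 P)
    (hD : MemLp D 2 P) (hTθ : ∫ ω, T ω ∂P = θ) (hD0 : ∫ ω, D ω ∂P = 0) (γ : ℝ) :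
    ∫ ω, (T ω - γ * D ω - θ) ^ 2 ∂P - ∫ ω, (T ω - θ) ^ 2 ∂P
      = γ ^ 2 * cov[D, D; P] - 2 * γ * cov[T, D; P] := by
  have hγD : MemLp (fun ω => γ * D ω) 2 P := hD.const_mul γ
  have hmean : ∫ ω, T ω - γ * D ω ∂P = θ := by
    rw [integral_sub (hT.integrable one_le_two) (hγD.integrable one_le_two), integral_const_mul,
      hTθ, hD0, mul_zero, sub_zero]
  rw [integral_sub_sq_eq_covariance_self hmean, integral_sub_sq_eq_covariance_self hTθ,
    covariance_fun_sub_fun_sub hT hγD hT hγD]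
  simp only [covariance_const_mul_left, covariance_const_mul_right, covariance_comm D T]
  ring

variable {ι : Type*} [DecidableEq ι] {X Z : ι → Ω → ℝ} {θ μZ c v : ℝ}

lemma integral_controlVariate_sq_sub_integral_sq (hX : ∀ i, MemLp (X i) 2 P)
    (hZ : ∀ i, MemLp (Z i) 2 P)
    (hXθ : ∀ i, ∫ ω, X i ω ∂P = θ) (hZμ : ∀ i, ∫ ω, Z i ω ∂P = μZ)
    (hXZ : ∀ i j, cov[X i, Z j; P] = if i = j then c else 0)
    (hZZ : ∀ i j, cov[Z i, Z j; P] = if i = j then v else 0)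
    {A₀ A₁ : Finset ι} (hdisj : Disjoint A₀ A₁) (hA₀ : A₀.Nonempty) (hA₁ : A₁.Nonempty) (γ : ℝ) :
    ∫ ω, ((∑ i ∈ A₀, X i ω) / #A₀
        - γ * ((∑ i ∈ A₀, Z i ω) / #A₀ - (∑ i ∈ A₁, Z i ω) / #A₁) - θ) ^ 2 ∂P
      - ∫ ω, ((∑ i ∈ A₀, X i ω) / #A₀ - θ) ^ 2 ∂P
      = γ ^ 2 * (v / #A₀ + v / #A₁) - 2 * γ * (c / #A₀) := by
  have hT := memLp_finsetSum_div_card A₀ fun i _ => hX i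
  have hM₀ := memLp_finsetSum_div_card A₀ fun i _ => hZ i
  have hM₁ := memLp_finsetSum_div_card A₁ fun i _ => hZ i
  have hZmean : ∀ s : Finset ι, s.Nonempty → ∫ ω, (∑ i ∈ s, Z i ω) / #s ∂P = μZ := fun s hs =>
    integral_finsetSum_div_card hs (fun i _ => (hZ i).integrable one_le_two) fun i _ => hZμ i
  have hD0 : ∫ ω, (∑ i ∈ A₀, Z i ω) / #A₀ - (∑ i ∈ A₁, Z i ω) / #A₁ ∂P = 0 := by
    rw [integral_sub (hM₀.integrable one_le_two) (hM₁.integrable one_le_two), hZmean A₀ hA₀,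
      hZmean A₁ hA₁, sub_self]
  have hD : MemLp (fun ω => (∑ i ∈ A₀, Z i ω) / #A₀ - (∑ i ∈ A₁, Z i ω) / #A₁) 2 P :=
    hM₀.sub hM₁
  have hTθ : ∫ ω, (∑ i ∈ A₀, X i ω) / #A₀ ∂P = θ :=
    integral_finsetSum_div_card hA₀ (fun i _ => (hX i).integrable one_le_two) fun i _ => hXθ i
  rw [integral_sub_mul_sub_sq_sub_integral_sub_sq hT hD hTθ hD0,
    covariance_fun_sub_fun_sub hM₀ hM₁ hM₀ hM₁, covariance_fun_sub_right hT hM₀ hM₁]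
  simp only [covariance_finsetSum_div_card_of_uncorrelated hX hZ hXZ,
    covariance_finsetSum_div_card_of_uncorrelated hZ hZ hZZ, inter_self,
    disjoint_iff_inter_eq_empty.mp hdisj, disjoint_iff_inter_eq_empty.mp hdisj.symm, card_empty]
  have h₀ : (#A₀ : ℝ) ≠ 0 := Nat.cast_ne_zero.mpr hA₀.card_pos.ne'
  have h₁ : (#A₁ : ℝ) ≠ 0 := Nat.cast_ne_zero.mpr hA₁.card_pos.ne'
  field_simp
  ring

end ControlVariate

theorem stmt8_general {Ωs : Type*} [MeasurableSpace Ωs] (P : Measure Ωs) [IsProbabilityMeasure P]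
    (W : ℕ → Ωs → ℝ × ℝ) (hmeas : ∀ i, Measurable (W i))
    (hindep : iIndepFun W P)
    (hident : ∀ i, IdentDistrib (W i) (W 0) P P)
    (hL2 : MemLp (W 0) 2 P)
    (A0 A1 : Finset ℕ) (hdisj : Disjoint A0 A1)
    (n0 n1 : ℕ) (hcard0 : A0.card = n0) (hcard1 : A1.card = n1)
    (hn0 : 1 ≤ n0) (hn1 : 1 ≤ n1)
    (φ1 : ℝ → ℝ) (hφ1 : Measurable φ1)
    (hφ1L2 : MemLp (fun ω => φ1 (W 0 ω).2) 2 P)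
    -- φ₁(Y) is a version of the conditional expectation E(X | Y)
    (hreg : (fun ω => φ1 (W 0 ω).2)
      =ᵐ[P] P[(fun ω => (W 0 ω).1) |
              MeasurableSpace.comap (fun ω => (W 0 ω).2) inferInstance])
    (θ : ℝ) (hθ : θ = ∫ ω, (W 0 ω).1 ∂P)
    (θhat0 θhat01 θhat1 : Ωs → ℝ)
    (h0 : θhat0 = fun ω => (∑ i ∈ A0, (W i ω).1) / n0)
    (h01 : θhat01 = fun ω => (∑ i ∈ A0, φ1 (W i ω).2) / n0)
    (h1 : θhat1 = fun ω => (∑ i ∈ A1, φ1 (W i ω).2) / n1)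
    (γstar : ℝ)
    (hγstar : γstar = n1 * cov P (fun ω => (W 0 ω).1) (fun ω => φ1 (W 0 ω).2)
        / ((n0 + n1 : ℕ) * var P (fun ω => φ1 (W 0 ω).2))) :
    (∫ ω, (θhat0 ω - γstar * (θhat01 ω - θhat1 ω) - θ) ^ 2 ∂P)
        - (∫ ω, (θhat0 ω - θ) ^ 2 ∂P)
      = -((n1 : ℝ) / (n0 * (n0 + n1 : ℕ)))
          * var P (P[(fun ω => (W 0 ω).1) |
              MeasurableSpace.comap (fun ω => (W 0 ω).2) inferInstance]) := by
  subst hθ h0 h01 h1 hγstar hcard0 hcard1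
  have hA₀ : A0.Nonempty := card_pos.mp hn0
  have hA₁ : A1.Nonempty := card_pos.mp hn1
  have hφ1snd : Measurable fun p : ℝ × ℝ => φ1 p.2 := hφ1.comp measurable_snd
  have hX : MemLp (fun ω => (W 0 ω).1) 2 P := hL2.fst
  have hZm : StronglyMeasurable[MeasurableSpace.comap (fun ω => (W 0 ω).2) inferInstance]
      (fun ω => φ1 (W 0 ω).2) := (hφ1.comp (comap_measurable _)).stronglyMeasurable
  have hcv := covariance_eq_covariance_self_of_ae_eq_condExp
    (measurable_snd.comp (hmeas 0)).comap_le hX hφ1L2 hZm hreg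
  simp only [var_eq_covariance, cov_eq_covariance_s8]
  rw [← covariance_congr_ae hreg hreg]
  refine (integral_controlVariate_sq_sub_integral_sq (X := fun i ω => (W i ω).1)
    (Z := fun i ω => φ1 (W i ω).2) (fun i => ((hident i).comp measurable_fst).symm.memLp_snd hX)
    (fun i => ((hident i).comp hφ1snd).symm.memLp_snd hφ1L2)
    (fun i => ((hident i).comp measurable_fst).integral_eq)
    (fun i => ((hident i).comp hφ1snd).integral_eq)
    (covariance_comp_of_iIndepFun_of_identDistrib hindep hident measurable_fst
      hφ1snd hX hφ1L2)
    (covariance_comp_of_iIndepFun_of_identDistrib hindep hident hφ1snd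
      hφ1snd hφ1L2 hφ1L2) hdisj hA₀ hA₁ _).trans ?_
  rw [hcv]
  have h₀ : (#A0 : ℝ) ≠ 0 := Nat.cast_ne_zero.mpr hA₀.card_pos.ne'
  have h₁ : (#A1 : ℝ) ≠ 0 := Nat.cast_ne_zero.mpr hA₁.card_pos.ne'
  -- valid also when `v = 0`, where `γ* = 0` because `x / 0 = 0`
  push_cast
  field_simp
  ring

/-- Marginal mean estimation with the regression-function choice: in the
marginal mean estimation setting, take `φ₁` to be a measurable version of the regression
function (`φ₁(Y) = E(X | Y)` almost surely) and assume `Var(E(X|Y)) > 0`.  Then, with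
`γ* := n₁·Cov(X, φ₁(Y))/(n·Var φ₁(Y))`,
`MSE(θ̂_{γ*}) − MSE(θ̂₀) = −(n₁/(n₀·n))·Var(E(X|Y))`. -/
theorem stmt8 {Ωs : Type*} [MeasurableSpace Ωs] (P : Measure Ωs) [IsProbabilityMeasure P]
    (W : ℕ → Ωs → ℝ × ℝ) (hmeas : ∀ i, Measurable (W i))
    (hindep : iIndepFun W P)
    (hident : ∀ i, IdentDistrib (W i) (W 0) P P)
    (hL2 : MemLp (W 0) 2 P)
    (A0 A1 : Finset ℕ) (hdisj : Disjoint A0 A1)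
    (n0 n1 : ℕ) (hcard0 : A0.card = n0) (hcard1 : A1.card = n1)
    (hn0 : 1 ≤ n0) (hn1 : 1 ≤ n1)
    (φ1 : ℝ → ℝ) (hφ1 : Measurable φ1)
    (hφ1L2 : MemLp (fun ω => φ1 (W 0 ω).2) 2 P)
    -- φ₁(Y) is a version of the conditional expectation E(X | Y)
    (hreg : (fun ω => φ1 (W 0 ω).2)
      =ᵐ[P] P[(fun ω => (W 0 ω).1) |
              MeasurableSpace.comap (fun ω => (W 0 ω).2) inferInstance])
    (hvarpos : 0 < var P (P[(fun ω => (W 0 ω).1) |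
              MeasurableSpace.comap (fun ω => (W 0 ω).2) inferInstance]))
    (θ : ℝ) (hθ : θ = ∫ ω, (W 0 ω).1 ∂P)
    (θhat0 θhat01 θhat1 : Ωs → ℝ)
    (h0 : θhat0 = fun ω => (∑ i ∈ A0, (W i ω).1) / n0)
    (h01 : θhat01 = fun ω => (∑ i ∈ A0, φ1 (W i ω).2) / n0)
    (h1 : θhat1 = fun ω => (∑ i ∈ A1, φ1 (W i ω).2) / n1)
    (γstar : ℝ)
    (hγstar : γstar = n1 * cov P (fun ω => (W 0 ω).1) (fun ω => φ1 (W 0 ω).2)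
        / ((n0 + n1 : ℕ) * var P (fun ω => φ1 (W 0 ω).2))) :
    (∫ ω, (θhat0 ω - γstar * (θhat01 ω - θhat1 ω) - θ) ^ 2 ∂P)
        - (∫ ω, (θhat0 ω - θ) ^ 2 ∂P)
      = -((n1 : ℝ) / (n0 * (n0 + n1 : ℕ)))
          * var P (P[(fun ω => (W 0 ω).1) |
              MeasurableSpace.comap (fun ω => (W 0 ω).2) inferInstance]) :=
  stmt8_general P W hmeas hindep hident hL2 A0 A1 hdisj n0 n1 hcard0 hcard1 hn0 hn1 φ1 hφ1 hφ1L2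
    hreg θ hθ θhat0 θhat01 θhat1 h0 h01 h1 γstar hγstar
end
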